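/- Strong admissibility of lowering spent foci: for every persistent context Θ, every spent context Σ, and every positive formula P, every derivation in LLM of the focused sequent ⊨ Θ : Σ,[P] can be transformed into a derivation of ⊨ Θ : ⌊Σ⌋,[P] of exactly the same size (the lowering does not change the shape of the resulting derivation). -/

import Mathlib

mutual
inductive PForm (α : Type) : Type
  | atom  : α → PForm α
  | one   : PForm α
  | tens  : PForm α → PForm α → PForm α
  | zero  : PForm α
  | plus  : PForm α → PForm α → PForm α
  | bang  : NForm α → PForm α
  | up    : NForm α → PForm α

inductive NForm (α : Type) : Type
  | natom : α → NForm α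
  | bot   : NForm α
  | parr  : NForm α → NForm α → NForm α
  | top   : NForm α
  | wth   : NForm α → NForm α → NForm α
  | quest : PForm α → NForm α
  | down  : PForm α → NForm α
end

mutual
def PForm.dual {α : Type} : PForm α → NForm α
  | .atom a   => .natom a
  | .one      => .bot
  | .tens P Q => .parr P.dual Q.dual
  | .zero     => .top
  | .plus P Q => .wth P.dual Q.dual
  | .bang N   => .quest N.dual
  | .up N     => .down N.dual

def NForm.dual {α : Type} : NForm α → PForm α
  | .natom a  => .atom a
  | .bot      => .one
  | .parr N M => .tens N.dual M.dual
  | .top      => .zero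
  | .wth N M  => .plus N.dual M.dual
  | .quest P  => .bang P.dual
  | .down P   => .up P.dual
end

/-- Items of a focused context: negative formulas or foci `[P]`. -/
inductive FItem (α : Type) : Type
  | neg : NForm α → FItem α
  | foc : PForm α → FItem α

/-- Sequents of LLM: inversion sequents `⊢ Θ : Γ` and focusing sequents `⊨ Θ : Ψ`. -/
inductive LLMSeq (α : Type) : Type
  | inv : Multiset (PForm α) → Multiset (NForm α) → LLMSeq α
  | foc : Multiset (PForm α) → Multiset (FItem α) → LLMSeq α

/-- A multiset of negatives seen as a focused context. -/
def negCtx {α : Type} (Γ : Multiset (NForm α)) : Multiset (FItem α) :=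
  Γ.map FItem.neg

/-- A multiset of positives seen as a focused context entirely made of foci. -/
def focCtx {α : Type} (Θ : Multiset (PForm α)) : Multiset (FItem α) :=
  Θ.map FItem.foc

/-- Sized derivability in LLM: `LLMS s n` means the sequent `s` has a derivation
consisting of exactly `n` rule instances. -/
inductive LLMS {α : Type} : LLMSeq α → ℕ → Prop
  | ax (Θ : Multiset (PForm α)) (a : α) :
      LLMS (.foc Θ {FItem.neg (.natom a), FItem.foc (.atom a)}) 1
  | one (Θ : Multiset (PForm α)) :
      LLMS (.foc Θ {FItem.foc .one}) 1
  | tens {Θ : Multiset (PForm α)} {Ψ Ξ : Multiset (FItem α)} {P Q : PForm α} {m n : ℕ} :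
      LLMS (.foc Θ (FItem.foc P ::ₘ Ψ)) m → LLMS (.foc Θ (FItem.foc Q ::ₘ Ξ)) n →
      LLMS (.foc Θ (FItem.foc (P.tens Q) ::ₘ (Ψ + Ξ))) (m + n + 1)
  | plusL {Θ : Multiset (PForm α)} {Ψ : Multiset (FItem α)} {P : PForm α} (Q : PForm α)
      {m : ℕ} :
      LLMS (.foc Θ (FItem.foc P ::ₘ Ψ)) m → LLMS (.foc Θ (FItem.foc (P.plus Q) ::ₘ Ψ)) (m + 1)
  | plusR {Θ : Multiset (PForm α)} {Ψ : Multiset (FItem α)} {Q : PForm α} (P : PForm α)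
      {m : ℕ} :
      LLMS (.foc Θ (FItem.foc Q ::ₘ Ψ)) m → LLMS (.foc Θ (FItem.foc (P.plus Q) ::ₘ Ψ)) (m + 1)
  | bang {Θ : Multiset (PForm α)} {N : NForm α} {m : ℕ} :
      LLMS (.inv Θ {N}) m → LLMS (.foc Θ {FItem.foc (.bang N)}) (m + 1)
  | up {Θ : Multiset (PForm α)} {Γ : Multiset (NForm α)} (Δ : Multiset (NForm α))
      (hΔ : Δ ≠ 0) {m : ℕ} :
      LLMS (.inv Θ (Γ + Δ)) m →
      LLMS (.foc Θ (negCtx Γ + Δ.map (fun N => FItem.foc (.up N)))) (m + 1)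
  | down {Θ : Multiset (PForm α)} {Γ : Multiset (NForm α)} (Θn Θ' : Multiset (PForm α))
      (hcopy : ∀ P ∈ Θn, P ∈ Θ) (hne : Θn ≠ 0 ∨ Θ' ≠ 0) {m : ℕ} :
      LLMS (.foc Θ (focCtx Θn + negCtx Γ + focCtx Θ')) m →
      LLMS (.inv Θ (Γ + Θ'.map NForm.down)) (m + 1)
  | bot {Θ : Multiset (PForm α)} {Γ : Multiset (NForm α)} {m : ℕ} :
      LLMS (.inv Θ Γ) m → LLMS (.inv Θ (NForm.bot ::ₘ Γ)) (m + 1)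
  | parr {Θ : Multiset (PForm α)} {Γ : Multiset (NForm α)} {N M : NForm α} {m : ℕ} :
      LLMS (.inv Θ (N ::ₘ M ::ₘ Γ)) m → LLMS (.inv Θ (NForm.parr N M ::ₘ Γ)) (m + 1)
  | top (Θ : Multiset (PForm α)) (Γ : Multiset (NForm α)) :
      LLMS (.inv Θ (NForm.top ::ₘ Γ)) 1
  | wth {Θ : Multiset (PForm α)} {Γ : Multiset (NForm α)} {N M : NForm α} {m n : ℕ} :
      LLMS (.inv Θ (N ::ₘ Γ)) m → LLMS (.inv Θ (M ::ₘ Γ)) n →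
      LLMS (.inv Θ (NForm.wth N M ::ₘ Γ)) (m + n + 1)
  | quest {Θ : Multiset (PForm α)} {Γ : Multiset (NForm α)} {P : PForm α} {m : ℕ} :
      LLMS (.inv (P ::ₘ Θ) Γ) m → LLMS (.inv Θ (NForm.quest P ::ₘ Γ)) (m + 1)

/-- Lowering of a single focused-context item: a spent focus `[⇑N]` becomes `N`. -/
def FItem.lower {α : Type} : FItem α → FItem α
  | .foc (.up N) => .neg N
  | x => x

@[simp] lemma FItem.lower_neg {α : Type} (N : NForm α) :
    FItem.lower (FItem.neg N) = FItem.neg N := rfl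

@[simp] lemma FItem.lower_focup {α : Type} (N : NForm α) :
    FItem.lower (FItem.foc (.up N)) = FItem.neg N := rfl

/-- A context is spent if every focus in it is of the form `[⇑N]`. -/
def SpentCtx {α : Type} (Ψ : Multiset (FItem α)) : Prop :=
  ∀ x ∈ Ψ, (∃ N, x = FItem.neg N) ∨ (∃ N, x = FItem.foc (.up N))

lemma map_lower_negCtx {α : Type} (Γ : Multiset (NForm α)) :
    (negCtx Γ).map FItem.lower = negCtx Γ := by
  simp [negCtx, Multiset.map_map, Function.comp_def]

lemma lower_main {α : Type} {s : LLMSeq α} {n : ℕ} (h : LLMS s n) :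
    ∀ (Θ : Multiset (PForm α)) (Ψ : Multiset (FItem α)) (P : PForm α),
      s = .foc Θ (FItem.foc P ::ₘ Ψ) → SpentCtx Ψ →
      LLMS (.foc Θ (FItem.foc P ::ₘ Ψ.map FItem.lower)) n := by
  induction h with
  | ax Θ' a =>
      intro Θ Ψ P heq hsp
      injection heq with hΘ hctx; subst hΘ
      have hctx' : FItem.neg (.natom a) ::ₘ ({FItem.foc (.atom a)} : Multiset (FItem α))
          = FItem.foc P ::ₘ Ψ := hctx
      rcases Multiset.cons_eq_cons.mp hctx' with ⟨h1, _⟩ | ⟨_, cs, h1, h2⟩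
      · exact absurd h1 (by simp)
      · rcases (Multiset.singleton_eq_cons_iff _).mp h1 with ⟨hP, hcs⟩
        subst hcs
        injection hP with hP; subst hP
        subst h2
        simp only [Multiset.map_cons, Multiset.map_zero, FItem.lower_neg]
        rw [show (FItem.foc (PForm.atom a) ::ₘ FItem.neg (NForm.natom a) ::ₘ
            (0 : Multiset (FItem α)))
            = ({FItem.neg (.natom a), FItem.foc (.atom a)} : Multiset (FItem α))
          from Multiset.cons_swap _ _ _]
        exact LLMS.ax _ a
  | one Θ' =>
      intro Θ Ψ P heq hsp
      injection heq with hΘ hctx; subst hΘ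
      rcases (Multiset.singleton_eq_cons_iff _).mp hctx with ⟨hP, hΨ⟩
      injection hP with hP; subst hP; subst hΨ
      simpa using LLMS.one _
  | @tens Θt Ψt Ξt Pt Qt mt nt h1 h2 ih1 ih2 =>
      intro Θ Ψ P heq hsp
      injection heq with hΘ hctx; subst hΘ
      rcases Multiset.cons_eq_cons.mp hctx with ⟨hP, hΨ⟩ | ⟨_, cs, h1', h2'⟩
      · injection hP with hP; subst hP; subst hΨ
        have hspΨt : SpentCtx Ψt := fun x hx => hsp x (by simp [hx])
        have hspΞt : SpentCtx Ξt := fun x hx => hsp x (by simp [hx])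
        have d1 := ih1 _ Ψt Pt rfl hspΨt
        have d2 := ih2 _ Ξt Qt rfl hspΞt
        have := LLMS.tens d1 d2
        simpa using this
      · exfalso
        have : FItem.foc (Pt.tens Qt) ∈ Ψ := by rw [h2']; exact Multiset.mem_cons_self _ _
        rcases hsp _ this with ⟨N, hN⟩ | ⟨N, hN⟩ <;> simp at hN
  | @plusL Θt Ψt Pt Qt mt h1 ih =>
      intro Θ Ψ P heq hsp
      injection heq with hΘ hctx; subst hΘ
      rcases Multiset.cons_eq_cons.mp hctx with ⟨hP, hΨ⟩ | ⟨_, cs, h1', h2'⟩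
      · injection hP with hP; subst hP; subst hΨ
        exact LLMS.plusL Qt (ih _ Ψt Pt rfl hsp)
      · exfalso
        have : FItem.foc (Pt.plus Qt) ∈ Ψ := by rw [h2']; exact Multiset.mem_cons_self _ _
        rcases hsp _ this with ⟨N, hN⟩ | ⟨N, hN⟩ <;> simp at hN
  | @plusR Θt Ψt Qt Pt mt h1 ih =>
      intro Θ Ψ P heq hsp
      injection heq with hΘ hctx; subst hΘ
      rcases Multiset.cons_eq_cons.mp hctx with ⟨hP, hΨ⟩ | ⟨_, cs, h1', h2'⟩
      · injection hP with hP; subst hP; subst hΨ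
        exact LLMS.plusR Pt (ih _ Ψt Qt rfl hsp)
      · exfalso
        have : FItem.foc (Pt.plus Qt) ∈ Ψ := by rw [h2']; exact Multiset.mem_cons_self _ _
        rcases hsp _ this with ⟨N, hN⟩ | ⟨N, hN⟩ <;> simp at hN
  | @bang Θt N mt h1 ih =>
      intro Θ Ψ P heq hsp
      injection heq with hΘ hctx; subst hΘ
      rcases (Multiset.singleton_eq_cons_iff _).mp hctx with ⟨hP, hΨ⟩
      injection hP with hP; subst hP; subst hΨ
      simpa using LLMS.bang h1
  | @up Θt Γt Δt hΔt mt h1 ih =>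
      intro Θ Ψ P heq hsp
      injection heq with hΘ hctx; subst hΘ
      have hmem : FItem.foc P ∈ negCtx Γt + Δt.map (fun N => FItem.foc (.up N)) := by
        rw [hctx]; exact Multiset.mem_cons_self _ _
      rcases Multiset.mem_add.mp hmem with hm | hm
      · rcases Multiset.mem_map.mp hm with ⟨N, _, hN⟩; exact absurd hN (by simp)
      rcases Multiset.mem_map.mp hm with ⟨N₀, hN₀, hN⟩
      injection hN with hN; subst hN
      rcases Multiset.exists_cons_of_mem hN₀ with ⟨Δ'', hΔ''⟩
      subst hΔ''
      have hctx2 : FItem.foc (PForm.up N₀) ::ₘ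
          (negCtx Γt + Δ''.map (fun N => FItem.foc (.up N)))
          = FItem.foc (PForm.up N₀) ::ₘ Ψ := by
        rw [← hctx]; simp [Multiset.add_cons]
      have hΨ : Ψ = negCtx Γt + Δ''.map (fun N => FItem.foc (.up N)) :=
        ((Multiset.cons_inj_right _).mp hctx2).symm
      subst hΨ
      have hmap : (negCtx Γt + Δ''.map fun N => FItem.foc (.up N)).map FItem.lower
          = negCtx (Γt + Δ'') := by
        simp [negCtx, Multiset.map_map, Function.comp_def]
      rw [hmap]
      have hpre : LLMS (.inv Θt ((Γt + Δ'') + ({N₀} : Multiset (NForm α)))) mt := by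
        have he : (Γt + Δ'') + ({N₀} : Multiset (NForm α)) = Γt + (N₀ ::ₘ Δ'') := by
          rw [add_comm, Multiset.singleton_add, Multiset.add_cons]
        rw [he]; exact h1
      have hd := LLMS.up (Θ := Θt) (Γ := Γt + Δ'') ({N₀} : Multiset (NForm α)) (by simp) hpre
      simp only [Multiset.map_singleton] at hd
      rwa [add_comm, Multiset.singleton_add] at hd
  | down Θn Θ' hcopy hne h1 ih => intro Θ Ψ P heq; exact absurd heq (by simp)
  | bot h1 ih => intro Θ Ψ P heq; exact absurd heq (by simp)
  | parr h1 ih => intro Θ Ψ P heq; exact absurd heq (by simp)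
  | top Θ' Γ' => intro Θ Ψ P heq; exact absurd heq (by simp)
  | wth h1 h2 ih1 ih2 => intro Θ Ψ P heq; exact absurd heq (by simp)
  | quest h1 ih => intro Θ Ψ P heq; exact absurd heq (by simp)

/-- Strong admissibility of lowering spent foci: the lowered sequent has a
derivation of exactly the same size.  A spent context is written as
`negCtx Γ₀ + Δ.map (fun N => FItem.foc (.up N))`; its lowering is `Γ₀ + Δ`. -/
theorem lowering_spent_foci_strong {α : Type} (Θ : Multiset (PForm α))
    (Γ₀ Δ : Multiset (NForm α)) (P : PForm α) (n : ℕ)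
    (h : LLMS (.foc Θ (FItem.foc P ::ₘ (negCtx Γ₀ + Δ.map (fun N => FItem.foc (.up N))))) n) :
    LLMS (.foc Θ (FItem.foc P ::ₘ negCtx (Γ₀ + Δ))) n := by
  have hsp : SpentCtx (negCtx Γ₀ + Δ.map (fun N => FItem.foc (.up N))) := by
    intro x hx
    rcases Multiset.mem_add.mp hx with hm | hm
    · rcases Multiset.mem_map.mp hm with ⟨N, _, hN⟩; exact Or.inl ⟨N, hN.symm⟩
    · rcases Multiset.mem_map.mp hm with ⟨N, _, hN⟩; exact Or.inr ⟨N, hN.symm⟩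
  have := lower_main h Θ _ P rfl hsp
  have hmap : (negCtx Γ₀ + Δ.map fun N => FItem.foc (.up N)).map FItem.lower
      = negCtx (Γ₀ + Δ) := by
    simp [negCtx, Multiset.map_map, Function.comp_def]
  rwa [hmap] at this
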